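/- Let (K,∂) be a differential field of characteristic 0 whose field of constants C is algebraically closed, and assume K itself is algebraically closed. Let (𝒦,∂) be a differential field extension of K with the same field of constants C. Let x_1,…,x_n ∈ 𝒦 be such that b_i := ∂x_i ∈ K for every i. If for every (μ_1,…,μ_n) ∈ C^n \ {0} the element μ_1b_1 + ⋯ + μ_nb_n does not lie in ∂(K), then x_1,…,x_n are algebraically independent over K; equivalently, the transcendence degree of K(x_1,…,x_n) over K equals n. (Ostrowski's theorem on 𝔾_a^n, §2 item 2.) -/

import Mathlib

/-!
Let `δ` be the derivation of `K[X₁, …, Xₙ]` extending `∂` with `δ Xᵢ = bᵢ`. By the chain rule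
`∂ (p x) = (δ p) x`, so the ideal of algebraic relations of `x` is `δ`-stable. On monomials of top
degree `δ` acts as `∂` on the coefficients, so if a nonzero relation `p` has a top coefficient `1`,
then `δ p` is smaller than `p` for the lexicographic order on (total degree, number of top-degree
monomials). A minimal relation so normalized therefore has `δ p = 0`: its top coefficients are
constants, and if `p_{m₀} = 1` with `m₀ i₀ ≠ 0`, the coefficient of `δ p` at `m = m₀ - eᵢ₀` reads
`∂ p_m + ∑ᵢ (mᵢ + 1) p_{m + eᵢ} bᵢ = 0`: a constant combination of the `bᵢ` lying in `∂(K)`, whose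
`i₀`-th weight is `m₀ i₀ ≠ 0` in characteristic zero.
-/

open MvPolynomial

namespace MvPolynomial

section MapCoeffs

variable {σ R S : Type*} [CommSemiring R] [CommSemiring S]

lemma addMonoidAlgebraMap_C (f : R →+ S) (a : R) :
    AddMonoidAlgebra.map f (C a : MvPolynomial σ R) = C (f a) := by
  classical
  ext m
  rw [coeff_addMonoidAlgebraMap, coeff_C, coeff_C]
  split_ifs <;> simp

lemma addMonoidAlgebraMap_mul_X (f : R →+ S) (p : MvPolynomial σ R) (i : σ) :
    AddMonoidAlgebra.map f (p * X i) = AddMonoidAlgebra.map f p * X i := by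
  classical
  ext m
  rw [coeff_addMonoidAlgebraMap, coeff_mul_X', coeff_mul_X']
  split_ifs <;> simp [coeff_addMonoidAlgebraMap]

end MapCoeffs

section TopSupport

variable {σ R : Type*} [CommSemiring R]

noncomputable def topSupport (p : MvPolynomial σ R) : Finset (σ →₀ ℕ) :=
  {m ∈ p.support | m.degree = p.totalDegree}

noncomputable def degreeCount (p : MvPolynomial σ R) : ℕ ×ₗ ℕ :=
  toLex (p.totalDegree, (topSupport p).card)

lemma topSupport_nonempty {p : MvPolynomial σ R} (hp : p ≠ 0) : (topSupport p).Nonempty := by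
  obtain ⟨m, hm, hsup⟩ := Finset.exists_mem_eq_sup p.support (support_nonempty.mpr hp)
    Finsupp.degree
  exact ⟨m, Finset.mem_filter.mpr ⟨hm, hsup.symm⟩⟩

lemma topSupport_C_mul {K : Type*} [Field K] {a : K} (ha : a ≠ 0) (p : MvPolynomial σ K) :
    topSupport (C a * p) = topSupport p := by
  unfold topSupport totalDegree
  rw [C_mul', support_smul_eq ha]

lemma degreeCount_C_mul {K : Type*} [Field K] {a : K} (ha : a ≠ 0) (p : MvPolynomial σ K) :
    degreeCount (C a * p) = degreeCount p := by
  unfold degreeCount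
  rw [topSupport_C_mul ha, totalDegree, C_mul', support_smul_eq ha, ← totalDegree]

end TopSupport

section ImplicitDeriv

variable {σ A : Type*} [Fintype σ] [CommRing A]

/-- The derivation of `A[X]` that extends `d` on coefficients and sends `X i` to `v i`. -/
noncomputable def implicitDeriv (d : Derivation ℤ A A) (v : σ → A) (p : MvPolynomial σ A) :
    MvPolynomial σ A :=
  AddMonoidAlgebra.map (d : A →+ A) p + ∑ i, C (v i) * pderiv i p

variable (d : Derivation ℤ A A) (v : σ → A)

lemma coeff_implicitDeriv (p : MvPolynomial σ A) (m : σ →₀ ℕ) :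
    coeff m (implicitDeriv d v p) =
      d (coeff m p) + ∑ i, coeff (m + Finsupp.single i 1) p * (m i + 1) * v i := by
  simp [implicitDeriv, coeff_sum, coeff_C_mul, coeff_pderiv, coeff_addMonoidAlgebraMap, mul_comm]

lemma implicitDeriv_add (p q : MvPolynomial σ A) :
    implicitDeriv d v (p + q) = implicitDeriv d v p + implicitDeriv d v q := by
  simp only [implicitDeriv, AddMonoidAlgebra.map_add, map_add, mul_add, Finset.sum_add_distrib]
  abel

lemma implicitDeriv_C (a : A) : implicitDeriv d v (C a) = C (d a) := by
  simp [implicitDeriv, addMonoidAlgebraMap_C]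

lemma implicitDeriv_mul_X (p : MvPolynomial σ A) (i : σ) :
    implicitDeriv d v (p * X i) = implicitDeriv d v p * X i + C (v i) * p := by
  classical
  simp only [implicitDeriv, addMonoidAlgebraMap_mul_X, Derivation.leibniz, pderiv_X, smul_eq_mul,
    mul_add, Finset.sum_add_distrib, Pi.single_apply, mul_ite, mul_one, mul_zero,
    Finset.sum_ite_eq, Finset.mem_univ, if_true, add_mul, Finset.sum_mul]
  rw [add_assoc, add_comm (C (v i) * p)]
  congr 2
  exact Finset.sum_congr rfl fun j _ => by ring

theorem derivation_aeval_eq_aeval_implicitDeriv {B : Type*} [CommRing B] [Algebra A B]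
    (dB : Derivation ℤ B B) (hd : ∀ a, dB (algebraMap A B a) = algebraMap A B (d a))
    (x : σ → B) (hx : ∀ i, dB (x i) = algebraMap A B (v i)) (p : MvPolynomial σ A) :
    dB (aeval x p) = aeval x (implicitDeriv d v p) := by
  induction p using MvPolynomial.induction_on with
  | C a => rw [aeval_C, hd, implicitDeriv_C, aeval_C]
  | add p q hp hq => rw [map_add, map_add, hp, hq, implicitDeriv_add, map_add]
  | mul_X p i hp =>
    rw [map_mul, Derivation.leibniz, hp, implicitDeriv_mul_X, map_add, map_mul, map_mul, aeval_X,
      aeval_C, hx, smul_eq_mul, smul_eq_mul]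
    ring

lemma coeff_implicitDeriv_of_totalDegree_le (p : MvPolynomial σ A) {m : σ →₀ ℕ}
    (hm : p.totalDegree ≤ m.degree) : coeff m (implicitDeriv d v p) = d (coeff m p) := by
  rw [coeff_implicitDeriv, add_eq_left]
  refine Finset.sum_eq_zero fun i _ => ?_
  rw [coeff_eq_zero_of_totalDegree_lt (d := m + Finsupp.single i 1), zero_mul, zero_mul]
  change _ < (m + Finsupp.single i 1).degree
  rw [map_add, Finsupp.degree_single]
  omega

lemma totalDegree_implicitDeriv_le (p : MvPolynomial σ A) :
    (implicitDeriv d v p).totalDegree ≤ p.totalDegree := by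
  refine Finset.sup_le fun m hm => ?_
  by_contra! hlt
  refine mem_support_iff.mp hm ?_
  rw [coeff_implicitDeriv_of_totalDegree_le d v p hlt.le, coeff_eq_zero_of_totalDegree_lt hlt,
    map_zero]

lemma topSupport_implicitDeriv_ssubset {p : MvPolynomial σ A} {m₀ : σ →₀ ℕ}
    (hm₀ : m₀ ∈ topSupport p) (h₁ : coeff m₀ p = 1)
    (hdeg : (implicitDeriv d v p).totalDegree = p.totalDegree) :
    topSupport (implicitDeriv d v p) ⊂ topSupport p := by
  unfold topSupport at hm₀ ⊢
  rw [hdeg]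
  have hcoeff {m : σ →₀ ℕ} (hm : m.degree = p.totalDegree) :
      coeff m (implicitDeriv d v p) = d (coeff m p) :=
    coeff_implicitDeriv_of_totalDegree_le d v p hm.ge
  refine (Finset.ssubset_iff_of_subset fun m hm => ?_).2 ⟨m₀, hm₀, fun hm => ?_⟩
  · rw [Finset.mem_filter, mem_support_iff] at hm ⊢
    refine ⟨fun h => hm.1 ?_, hm.2⟩
    rw [hcoeff hm.2, h, map_zero]
  · rw [Finset.mem_filter, mem_support_iff, hcoeff (Finset.mem_filter.mp hm₀).2, h₁,
      Derivation.map_one_eq_zero] at hm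
    exact hm.1 rfl

lemma degreeCount_implicitDeriv_lt {p : MvPolynomial σ A} {m₀ : σ →₀ ℕ}
    (hm₀ : m₀ ∈ topSupport p) (h₁ : coeff m₀ p = 1) :
    degreeCount (implicitDeriv d v p) < degreeCount p := by
  rw [degreeCount, degreeCount, Prod.Lex.toLex_lt_toLex]
  rcases (totalDegree_implicitDeriv_le d v p).lt_or_eq with hlt | heq
  · exact .inl hlt
  · exact .inr ⟨heq, Finset.card_lt_card (topSupport_implicitDeriv_ssubset d v hm₀ h₁ heq)⟩

lemma exists_sum_mul_eq_of_implicitDeriv_eq_zero [CharZero A] {p : MvPolynomial σ A}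
    (hp : implicitDeriv d v p = 0) {m₀ : σ →₀ ℕ} (hm₀ : m₀ ∈ topSupport p)
    (h₁ : coeff m₀ p = 1) (hm₀' : m₀ ≠ 0) :
    ∃ μ : σ → A, μ ≠ 0 ∧ (∀ i, d (μ i) = 0) ∧ ∃ w, ∑ i, μ i * v i = d w := by
  have htop : m₀.degree = p.totalDegree := (Finset.mem_filter.mp hm₀).2
  obtain ⟨i₀, hi₀⟩ : ∃ i, m₀ i ≠ 0 := by
    by_contra! h
    exact hm₀' (Finsupp.ext h)
  set m₁ := m₀ - Finsupp.single i₀ 1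
  have hm₁ : m₁ + Finsupp.single i₀ 1 = m₀ :=
    tsub_add_cancel_of_le (Finsupp.single_le_iff.mpr (Nat.one_le_iff_ne_zero.mpr hi₀))
  have hdeg (i : σ) : p.totalDegree ≤ (m₁ + Finsupp.single i 1).degree := by
    rw [← htop, ← hm₁, map_add, map_add, Finsupp.degree_single, Finsupp.degree_single]
  have hconst (i : σ) : d (coeff (m₁ + Finsupp.single i 1) p) = 0 := by
    rw [← coeff_implicitDeriv_of_totalDegree_le d v p (hdeg i), hp, coeff_zero]
  refine ⟨fun i => coeff (m₁ + Finsupp.single i 1) p * ((m₁ i : A) + 1), ?_, fun i => ?_,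
    -coeff m₁ p, ?_⟩
  · refine Function.ne_iff.mpr ⟨i₀, ?_⟩
    rw [hm₁, h₁, one_mul, Pi.zero_apply]
    exact_mod_cast (m₁ i₀).succ_ne_zero
  · rw [Derivation.leibniz, hconst, smul_zero, add_zero, map_add, Derivation.map_natCast,
      Derivation.map_one_eq_zero, add_zero, smul_zero]
  · have h := coeff_implicitDeriv d v p m₁
    rw [hp, coeff_zero] at h
    rw [map_neg]
    linear_combination -h

lemma exists_mem_implicitDeriv_eq_zero {K : Type*} [Field K] (d : Derivation ℤ K K) (v : σ → K)
    (I : Ideal (MvPolynomial σ K)) (hI : ∀ p ∈ I, implicitDeriv d v p ∈ I) (hI₀ : I ≠ ⊥) :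
    ∃ p ∈ I, implicitDeriv d v p = 0 ∧ ∃ m ∈ topSupport p, coeff m p = 1 := by
  obtain ⟨p, hpI, hp₀⟩ := Submodule.exists_mem_ne_zero_of_ne_bot hI₀
  obtain ⟨q, ⟨hqI, hq₀⟩, hq_min⟩ :=
    exists_minimalFor_of_wellFoundedLT (fun q => q ∈ I ∧ q ≠ 0) degreeCount ⟨p, hpI, hp₀⟩
  obtain ⟨m, hm⟩ := topSupport_nonempty hq₀
  have hc : coeff m q ≠ 0 := mem_support_iff.mp (Finset.mem_filter.mp hm).1
  set r := C (coeff m q)⁻¹ * q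
  have hrI : r ∈ I := I.mul_mem_left _ hqI
  have hmr : m ∈ topSupport r := (topSupport_C_mul (inv_ne_zero hc) q).symm ▸ hm
  have hr₁ : coeff m r = 1 := by rw [coeff_C_mul, inv_mul_cancel₀ hc]
  refine ⟨r, hrI, ?_, m, hmr, hr₁⟩
  by_contra hne
  have hlt := degreeCount_C_mul (inv_ne_zero hc) q ▸ degreeCount_implicitDeriv_lt d v hmr hr₁
  exact hlt.not_ge (hq_min ⟨hI r hrI, hne⟩ hlt.le)

end ImplicitDeriv

end MvPolynomial

theorem algebraicIndependent_of_sum_const_mul_ne_deriv {σ K L : Type*} [Fintype σ] [Field K]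
    [CharZero K] [CommRing L] [Nontrivial L] [Algebra K L]
    (dK : Derivation ℤ K K) (dL : Derivation ℤ L L)
    (hd : ∀ a, dL (algebraMap K L a) = algebraMap K L (dK a))
    (x : σ → L) (v : σ → K) (hx : ∀ i, dL (x i) = algebraMap K L (v i))
    (hv : ∀ μ : σ → K, μ ≠ 0 → (∀ i, dK (μ i) = 0) → ∀ w, ∑ i, μ i * v i ≠ dK w) :
    AlgebraicIndependent K x := by
  rw [algebraicIndependent_iff]
  by_contra! ⟨p, hpx, hp₀⟩
  let I := RingHom.ker (aeval (R := K) x)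
  have hI : ∀ q ∈ I, implicitDeriv dK v q ∈ I := fun q hq => by
    rw [RingHom.mem_ker, ← derivation_aeval_eq_aeval_implicitDeriv dK v dL hd x hx,
      RingHom.mem_ker.mp hq, map_zero]
  have hI₀ : I ≠ ⊥ := fun h => hp₀ <| Ideal.mem_bot.mp <| h ▸ RingHom.mem_ker.mpr hpx
  obtain ⟨q, hqI, hq, m₀, hm₀, h₁⟩ := exists_mem_implicitDeriv_eq_zero dK v I hI hI₀
  have hm₀' : m₀ ≠ 0 := by
    rintro rfl
    have hq₁ : q = 1 := by
      rw [totalDegree_eq_zero_iff_eq_C.mp (Finset.mem_filter.mp hm₀).2.symm, h₁, C_1]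
    exact one_ne_zero (by simpa [hq₁] using RingHom.mem_ker.mp hqI : (1 : L) = 0)
  obtain ⟨μ, hμ, hμc, w, hw⟩ := exists_sum_mul_eq_of_implicitDeriv_eq_zero dK v hq hm₀ h₁ hm₀'
  exact hv μ hμ hμc w hw

def Derivation.ofLeibniz {L : Type*} [CommRing L] (D : L → L)
    (hadd : ∀ a b, D (a + b) = D a + D b) (hmul : ∀ a b, D (a * b) = a * D b + D a * b) :
    Derivation ℤ L L :=
  Derivation.mk' (AddMonoidHom.mk' D hadd).toIntLinearMap fun a b => by
    simp only [AddMonoidHom.coe_toIntLinearMap, AddMonoidHom.mk'_apply, hmul, smul_eq_mul]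
    ring

def Derivation.restrictSubfield {L : Type*} [Field L] (d : Derivation ℤ L L) (K : Subfield L)
    (hK : ∀ a ∈ K, d a ∈ K) : Derivation ℤ K K :=
  Derivation.mk' (AddMonoidHom.mk' (fun a : K => (⟨d (a : L), hK a a.2⟩ : K))
    fun a b => Subtype.ext (map_add d (a : L) b)).toIntLinearMap fun a b => Subtype.ext <| by
      simp [Derivation.leibniz]

theorem ostrowski_theorem_on_Ga_n_general
    (𝒦 : Type*) [Field 𝒦] [CharZero 𝒦]
    (D : 𝒦 → 𝒦)
    (hadd : ∀ a b : 𝒦, D (a + b) = D a + D b)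
    (hmul : ∀ a b : 𝒦, D (a * b) = a * D b + D a * b)
    -- the base field K, a differential subfield, algebraically closed
    (K : Subfield 𝒦) (hDK : ∀ x ∈ K, D x ∈ K)
    -- the field of constants C of 𝒦, contained in K, algebraically closed
    (C : Subfield 𝒦) (hC : ∀ x : 𝒦, D x = 0 ↔ x ∈ C)
    -- the data
    (n : ℕ) (x : Fin n → 𝒦) (b : Fin n → 𝒦)
    (hb : ∀ i, b i = D (x i))
    (hbK : ∀ i, b i ∈ K)
    -- non-degeneracy: no nonzero C-linear combination of the bᵢ is a derivative
    -- of an element of K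
    (hnd : ∀ μ : Fin n → C, μ ≠ 0 →
      ¬ ∃ v : 𝒦, v ∈ K ∧ (∑ i, (μ i : 𝒦) * b i) = D v) :
    AlgebraicIndependent K x := by
  let d := Derivation.ofLeibniz D hadd hmul
  refine algebraicIndependent_of_sum_const_mul_ne_deriv (d.restrictSubfield K hDK) d
    (fun _ => rfl) x (fun i => ⟨b i, hbK i⟩) (fun i => (hb i).symm) fun μ hμ hμc w hw => ?_
  let μC : Fin n → C := fun i => ⟨μ i, (hC _).mp (congrArg Subtype.val (hμc i))⟩
  refine hnd μC (fun h => hμ (funext fun i => Subtype.ext ?_)) ⟨w, w.2, ?_⟩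
  · exact congrArg (fun c : C => (c : 𝒦)) (congrFun h i)
  · have h := congrArg Subtype.val hw
    push_cast at h
    exact h

/-- **Ostrowski's theorem on 𝔾ₐⁿ** (§2, item 2).
Let `(𝒦, D)` be a differential field of characteristic zero, `K` a subfield stable
under `D`, with `K` algebraically closed, and let `C` be the common field of
constants of `𝒦` (and of `K`), assumed algebraically closed and contained in `K`.
If `x₁, …, xₙ ∈ 𝒦` satisfy `bᵢ := D xᵢ ∈ K` and for every nonzero vector
`(μ₁, …, μₙ) ∈ Cⁿ` the combination `μ₁b₁ + ⋯ + μₙbₙ` is not a derivative `D v` of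
an element `v ∈ K`, then `x₁, …, xₙ` are algebraically independent over `K`
(equivalently, `trdeg K(x₁,…,xₙ)/K = n`). -/
theorem ostrowski_theorem_on_Ga_n
    (𝒦 : Type*) [Field 𝒦] [CharZero 𝒦]
    (D : 𝒦 → 𝒦)
    (hadd : ∀ a b : 𝒦, D (a + b) = D a + D b)
    (hmul : ∀ a b : 𝒦, D (a * b) = a * D b + D a * b)
    -- the base field K, a differential subfield, algebraically closed
    (K : Subfield 𝒦) (hDK : ∀ x ∈ K, D x ∈ K) (hKac : IsAlgClosed K)
    -- the field of constants C of 𝒦, contained in K, algebraically closed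
    (C : Subfield 𝒦) (hC : ∀ x : 𝒦, D x = 0 ↔ x ∈ C)
    (hCK : C ≤ K) (hCac : IsAlgClosed C)
    -- the data
    (n : ℕ) (x : Fin n → 𝒦) (b : Fin n → 𝒦)
    (hb : ∀ i, b i = D (x i))
    (hbK : ∀ i, b i ∈ K)
    -- non-degeneracy: no nonzero C-linear combination of the bᵢ is a derivative
    -- of an element of K
    (hnd : ∀ μ : Fin n → C, μ ≠ 0 →
      ¬ ∃ v : 𝒦, v ∈ K ∧ (∑ i, (μ i : 𝒦) * b i) = D v) :
    AlgebraicIndependent K x :=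
  ostrowski_theorem_on_Ga_n_general 𝒦 D hadd hmul K hDK C hC n x b hb hbK hnd
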